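/- For g = the permutation-type matrix with rows (1,0,0,0),(0,1,0,0),(0,0,0,1),(0,0,-1,0) in U(4), the conjugated subalgebra Ad_g(su(2)^d) satisfies δ(Ad_g(su(2)^d)) ⊂ Ad_g(su(2)^d) ∧ u(4), i.e. gSU(2)^d g⁻¹ is a coisotropic subgroup. -/

import Mathlib

/-!
`Ad_g` is the identity on the first `2 × 2` block and conjugation by `[[0,1],[-1,0]]` on the
second one, which negates `H` and `E` and fixes `F`; hence `Ad_g(su(2)^d)` is spanned by
`H₁ - H₃`, `E₁ - E₃` and `F₁ + F₃`. The cobracket kills `H₁ - H₃`, and the polarization identity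
`2 (a∧b - c∧d) = (a - c)∧(b + d) + (a + c)∧(b - d)` writes `δ(E₁ - E₃) = E₁∧H₁ - E₃∧H₃` as
`(E₁ - E₃)∧(H₁ + H₃) - (H₁ - H₃)∧(E₁ + E₃)` up to a factor `2`, and similarly for `δ(F₁ + F₃)`.
-/

open ExteriorAlgebra

noncomputable section

abbrev M4 := Matrix (Fin 4) (Fin 4) ℂ

noncomputable def elm (i j : Fin 4) : M4 := Matrix.single i j (1 : ℂ)

noncomputable def Hgen : Fin 3 → M4 := fun i =>
  Complex.I • (elm i.castSucc i.castSucc - elm i.succ i.succ)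
noncomputable def Egen : Fin 3 → M4 := fun i =>
  (2 * Complex.I)⁻¹ • (elm i.castSucc i.succ + elm i.succ i.castSucc)
noncomputable def Fgen : Fin 3 → M4 := fun i =>
  (2⁻¹ : ℂ) • (elm i.castSucc i.succ - elm i.succ i.castSucc)
noncomputable def Hc : M4 := Complex.I • (1 : M4)

noncomputable def wedge (x y : M4) : ExteriorAlgebra ℝ M4 :=
  ExteriorAlgebra.ι ℝ x * ExteriorAlgebra.ι ℝ y

/-- the conjugating matrix `g`, with rows (1,0,0,0),(0,1,0,0),(0,0,0,1),(0,0,-1,0) -/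
noncomputable def gmat : M4 := !![1,0,0,0; 0,1,0,0; 0,0,0,1; 0,0,-1,0]

/-- `Ad_g(X) = g X g⁻¹` -/
noncomputable def Adg (x : M4) : M4 := gmat * x * gmat⁻¹

/-- the conjugated diagonal su(2): `Ad_g(su(2)^d)` -/
noncomputable def su2dg : Submodule ℝ M4 :=
  Submodule.span ℝ {Adg (Hgen 0 + Hgen 2), Adg (Egen 0 + Egen 2), Adg (Fgen 0 + Fgen 2)}

/-- `Ad_g(su(2)^d) ∧ u(4)` inside `Λ² u(4)` -/
noncomputable def Wg : Submodule ℝ (ExteriorAlgebra ℝ M4) :=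
  Submodule.span ℝ {ω | ∃ x ∈ su2dg, ∃ y : M4, y.conjTranspose = -y ∧ ω = wedge x y}

lemma Hgen_mem_skewAdjoint (i : Fin 3) : Hgen i ∈ skewAdjoint M4 := by
  simp [skewAdjoint.mem_iff, Hgen, elm, Matrix.star_eq_conjTranspose]

lemma Egen_mem_skewAdjoint (i : Fin 3) : Egen i ∈ skewAdjoint M4 := by
  simp [skewAdjoint.mem_iff, Egen, elm, Matrix.star_eq_conjTranspose, Matrix.single_neg,
    add_comm]

lemma Fgen_mem_skewAdjoint (i : Fin 3) : Fgen i ∈ skewAdjoint M4 := by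
  simp [skewAdjoint.mem_iff, Fgen, elm, Matrix.star_eq_conjTranspose, ← smul_neg]

lemma det_gmat : gmat.det = 1 := by
  simp [gmat, Matrix.det_succ_row_zero, Fin.sum_univ_succ]

lemma Adg_eq_of_mul_eq {x y : M4} (h : gmat * x = y * gmat) : Adg x = y := by
  rw [Adg, h, Matrix.mul_nonsing_inv_cancel_right _ _ (by simp [det_gmat])]

lemma Adg_Hgen_add : Adg (Hgen 0 + Hgen 2) = Hgen 0 - Hgen 2 := by
  refine Adg_eq_of_mul_eq ?_
  ext a b; fin_cases a <;> fin_cases b <;>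
    simp [gmat, Hgen, elm, Matrix.mul_apply, Matrix.single_apply]

lemma Adg_Egen_add : Adg (Egen 0 + Egen 2) = Egen 0 - Egen 2 := by
  refine Adg_eq_of_mul_eq ?_
  ext a b; fin_cases a <;> fin_cases b <;>
    simp [gmat, Egen, elm, Matrix.mul_apply, Matrix.single_apply]

lemma Adg_Fgen_add : Adg (Fgen 0 + Fgen 2) = Fgen 0 + Fgen 2 := by
  refine Adg_eq_of_mul_eq ?_
  ext a b; fin_cases a <;> fin_cases b <;>
    simp [gmat, Fgen, elm, Matrix.mul_apply, Matrix.single_apply]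

lemma Hgen_sub_mem_su2dg : Hgen 0 - Hgen 2 ∈ su2dg :=
  Adg_Hgen_add ▸ Submodule.subset_span (by simp)

lemma Egen_sub_mem_su2dg : Egen 0 - Egen 2 ∈ su2dg :=
  Adg_Egen_add ▸ Submodule.subset_span (by simp)

lemma Fgen_add_mem_su2dg : Fgen 0 + Fgen 2 ∈ su2dg :=
  Adg_Fgen_add ▸ Submodule.subset_span (by simp)

lemma wedge_swap (x y : M4) : wedge y x = -wedge x y :=
  eq_neg_of_add_eq_zero_right (ι_add_mul_swap (R := ℝ) x y)

lemma wedge_mem_Wg {x y : M4} (hx : x ∈ su2dg) (hy : y ∈ skewAdjoint M4) : wedge x y ∈ Wg :=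
  Submodule.subset_span ⟨x, hx, y, skewAdjoint.mem_iff.mp hy, rfl⟩

lemma wedge_mem_Wg' {x y : M4} (hx : x ∈ su2dg) (hy : y ∈ skewAdjoint M4) : wedge y x ∈ Wg := by
  rw [wedge_swap, neg_mem_iff]
  exact wedge_mem_Wg hx hy

lemma wedge_sub_wedge_mem_Wg {a b c d : M4} (hac : a - c ∈ su2dg) (hbd : b + d ∈ skewAdjoint M4)
    (hbd' : b - d ∈ su2dg) (hac' : a + c ∈ skewAdjoint M4) : wedge a b - wedge c d ∈ Wg := by
  have polarization : (2 : ℝ) • (wedge a b - wedge c d) =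
      wedge (a - c) (b + d) + wedge (a + c) (b - d) := by
    simp only [wedge, map_add, map_sub, two_smul]
    noncomm_ring
  rw [← Submodule.smul_mem_iff Wg (two_ne_zero' ℝ), polarization]
  exact add_mem (wedge_mem_Wg hac hbd) (wedge_mem_Wg' hbd' hac')

lemma wedge_add_wedge_mem_Wg {a b c d : M4} (hac : a + c ∈ su2dg) (hbd : b + d ∈ skewAdjoint M4)
    (hbd' : b - d ∈ su2dg) (hac' : a - c ∈ skewAdjoint M4) : wedge a b + wedge c d ∈ Wg := by
  have h := wedge_sub_wedge_mem_Wg (c := -c) (by rwa [sub_neg_eq_add]) hbd hbd'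
    (by rwa [← sub_eq_add_neg])
  simpa only [wedge, map_neg, neg_mul, sub_neg_eq_add] using h

theorem conjugated_su2_coisotropic_general
    (δ : M4 →ₗ[ℝ] ExteriorAlgebra ℝ M4)
    (hH : ∀ i, δ (Hgen i) = 0)
    (hE : ∀ i, δ (Egen i) = wedge (Egen i) (Hgen i))
    (hF : ∀ i, δ (Fgen i) = wedge (Fgen i) (Hgen i)) :
    ∀ x ∈ su2dg, δ x ∈ Wg := by
  have hH_skew : Hgen 0 + Hgen 2 ∈ skewAdjoint M4 :=
    add_mem (Hgen_mem_skewAdjoint 0) (Hgen_mem_skewAdjoint 2)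
  suffices h : su2dg ≤ Wg.comap δ from fun x hx => h hx
  refine Submodule.span_le.mpr ?_
  simp only [Set.insert_subset_iff, Set.singleton_subset_iff, SetLike.mem_coe,
    Submodule.mem_comap, Adg_Hgen_add, Adg_Egen_add, Adg_Fgen_add, map_sub, map_add, hH, hE, hF]
  refine ⟨by simp, ?_, ?_⟩
  · exact wedge_sub_wedge_mem_Wg Egen_sub_mem_su2dg hH_skew Hgen_sub_mem_su2dg
      (add_mem (Egen_mem_skewAdjoint 0) (Egen_mem_skewAdjoint 2))
  · exact wedge_add_wedge_mem_Wg Fgen_add_mem_su2dg hH_skew Hgen_sub_mem_su2dg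
      (sub_mem (Fgen_mem_skewAdjoint 0) (Fgen_mem_skewAdjoint 2))

/-- For the standard coboundary cobracket `δ` of `u(4)`, the conjugated diagonal
subalgebra `Ad_g(su(2)^d)` satisfies `δ(Ad_g(su(2)^d)) ⊆ Ad_g(su(2)^d) ∧ u(4)`,
i.e. `g SU(2)^d g⁻¹` is a coisotropic subgroup. -/
theorem conjugated_su2_coisotropic
    (δ : M4 →ₗ[ℝ] ExteriorAlgebra ℝ M4)
    (hH : ∀ i, δ (Hgen i) = 0) (hHc : δ Hc = 0)
    (hE : ∀ i, δ (Egen i) = wedge (Egen i) (Hgen i))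
    (hF : ∀ i, δ (Fgen i) = wedge (Fgen i) (Hgen i)) :
    ∀ x ∈ su2dg, δ x ∈ Wg :=
  conjugated_su2_coisotropic_general δ hH hE hF

end
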